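/- arXiv:1810.11702 — 4 statements merged into one kernel-verified Lean document; each statement's English description precedes it below -/
import Mathlib

section
/- With the same recursive definition I^a_0 := M^a, I^a_{m+1} := ⋂_{b∈G} { e ∈ I^b_m | μ^a(b) }: if there exist agents a, b ∈ G with μ^a(b) false (a cannot see b), then for every agent c ∈ G and all m ≥ 2, I^c_m = ∅. -/
/-- The recursive knowledge sets: `knowSet G M 0 a = M a` and
`knowSet G M (m+1) a = ⋂_{b ∈ G} { e ∈ knowSet G M m b | b ∈ M a }`. -/
def knowSet {E : Type*} (G : Set E) (M : E → Set E) : ℕ → E → Set E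
  | 0, a => M a
  | m + 1, a => ⋂ b ∈ G, {e ∈ knowSet G M m b | b ∈ M a}

/-! One blind pair `b ∉ M a` empties every `I^a_{m+1}`, since each of them requires
`μ^a(b)`; and an empty `I^a_{m+1}` is one of the sets intersected in every `I^c_{m+2}`. -/

namespace knowSet

variable {E : Type*} {G : Set E} {M : E → Set E}

theorem mem_succ {m : ℕ} {a e : E} :
    e ∈ knowSet G M (m + 1) a ↔ ∀ b ∈ G, e ∈ knowSet G M m b ∧ b ∈ M a := by
  simp only [knowSet, Set.mem_iInter, Set.mem_ofPred_eq]

theorem succ_eq_empty_of_not_mem {a b : E} (hb : b ∈ G) (hab : b ∉ M a) (m : ℕ) :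
    knowSet G M (m + 1) a = ∅ :=
  Set.eq_empty_of_forall_notMem fun _ he => hab (mem_succ.1 he b hb).2

theorem succ_eq_empty_of_eq_empty {m : ℕ} {d : E} (hd : d ∈ G)
    (hempty : knowSet G M m d = ∅) (c : E) : knowSet G M (m + 1) c = ∅ :=
  Set.eq_empty_of_forall_notMem fun e he => by
    simpa [hempty] using (mem_succ.1 he d hd).1

end knowSet

theorem stmt1_general {E : Type*} (G : Set E) (M : E → Set E)
    (hblind : ∃ a ∈ G, ∃ b ∈ G, b ∉ M a) :
    ∀ c ∈ G, ∀ m : ℕ, 2 ≤ m → knowSet G M m c = ∅ := by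
  obtain ⟨a, ha, b, hb, hab⟩ := hblind
  intro c _ m hm
  obtain ⟨n, rfl⟩ : ∃ n, m = n + 2 := ⟨m - 2, by omega⟩
  exact knowSet.succ_eq_empty_of_eq_empty ha (knowSet.succ_eq_empty_of_not_mem hb hab n) c

theorem stmt1 {E : Type*} [Fintype E] (G : Set E) (M : E → Set E)
    (hself : ∀ a ∈ G, a ∈ M a)
    (hblind : ∃ a ∈ G, ∃ b ∈ G, b ∉ M a) :
    ∀ c ∈ G, ∀ m : ℕ, 2 ≤ m → knowSet G M m c = ∅ :=
  stmt1_general G M hblind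
end

section
/- The eventual common-knowledge set is independent of the agent used to compute it: under the setup of the recursive knowledge sets, for all agents a, a' ∈ G and all m ≥ 2, I^a_m = I^{a'}_m. -/
section

variable {E : Type*} (G : Set E) (M : E → Set E)

open Classical in
theorem knowSet_succ (m : ℕ) (a : E) :
    knowSet G M (m + 1) a = if G ⊆ M a then ⋂ b ∈ G, knowSet G M m b else ∅ := by
  ext e
  split_ifs with ha
  · simp only [knowSet, Set.mem_iInter, Set.mem_ofPred_eq]
    exact ⟨fun h b hb => (h b hb).1, fun h b hb => ⟨h b hb, ha hb⟩⟩
  · obtain ⟨b, hb, hnb⟩ := Set.not_subset.mp ha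
    simp only [knowSet, Set.mem_iInter, Set.mem_ofPred_eq, Set.mem_empty_iff_false, iff_false]
    exact fun h => hnb (h b hb).2

theorem knowSet_add_two_eq_empty {a : E} (ha : a ∈ G) (hna : ¬ G ⊆ M a) (m : ℕ) (a' : E) :
    knowSet G M (m + 2) a' = ∅ := by
  have hempty : knowSet G M (m + 1) a = ∅ := by rw [knowSet_succ, if_neg hna]
  rw [knowSet_succ]
  split_ifs
  · exact Set.subset_eq_empty (Set.biInter_subset_of_mem ha) hempty
  · rfl

end

theorem stmt3_general {E : Type*} (G : Set E) (M : E → Set E) :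
    ∀ a ∈ G, ∀ a' ∈ G, ∀ m : ℕ, 2 ≤ m → knowSet G M m a = knowSet G M m a' := by
  intro a ha a' ha' m hm
  obtain ⟨k, rfl⟩ := Nat.exists_eq_add_of_le' hm
  by_cases hA : G ⊆ M a
  · by_cases hA' : G ⊆ M a'
    · rw [knowSet_succ, knowSet_succ G M _ a', if_pos hA, if_pos hA']
    · rw [knowSet_add_two_eq_empty G M ha' hA', knowSet_add_two_eq_empty G M ha' hA']
  · rw [knowSet_add_two_eq_empty G M ha hA, knowSet_add_two_eq_empty G M ha hA]

theorem stmt3 {E : Type*} [Fintype E] (G : Set E) (M : E → Set E)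
    (hself : ∀ a ∈ G, a ∈ M a) :
    ∀ a ∈ G, ∀ a' ∈ G, ∀ m : ℕ, 2 ≤ m → knowSet G M m a = knowSet G M m a' :=
  stmt3_general G M
end

section
/- Disagreement bound for inverse-CDF correlated sampling: if two agents sample via inverse-CDF from probability mass functions p and q on {1,...,n} using a shared uniform δ ∈ [0,1), then the probability that their sampled actions differ is at most Σ_{u=1}^{n} |F_p(u) − F_q(u)| · 2, where F_p(u) = Σ_{v≤u} p(v); more precisely it is at most the Lebesgue measure of the set of δ lying in distinct CDF intervals, which is bounded by Σ_u |F_p(u) − F_q(u)| plus Σ_u |F_p(u−1) − F_q(u−1)|. -/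
open MeasureTheory

/-- `U` performs inverse-CDF sampling for the pmf `p`. -/
def IsInvCDFSampler {n : ℕ} (p : Fin n → ℝ) (U : ℝ → Fin n) : Prop :=
  ∀ δ ∈ Set.Ico (0 : ℝ) 1,
    (∑ v ∈ Finset.univ.filter (· < U δ), p v) ≤ δ ∧
      δ < ∑ v ∈ Finset.univ.filter (· ≤ U δ), p v

lemma ico_diff_vol (a b c d : ℝ) :
    volume (Set.Ico a b \ Set.Ico c d) ≤ ENNReal.ofReal (|a - c| + |b - d|) := by
  have hsub : Set.Ico a b \ Set.Ico c d ⊆ Set.Ico a (min b c) ∪ Set.Ico (max a d) b := by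
    rintro x ⟨⟨hax, hxb⟩, hnot⟩
    rcases lt_or_ge x c with h | h
    · exact Or.inl ⟨hax, lt_min hxb h⟩
    · have hd : d ≤ x := by
        by_contra hdx
        exact hnot ⟨h, lt_of_not_ge hdx⟩
      exact Or.inr ⟨max_le hax hd, hxb⟩
  calc volume (Set.Ico a b \ Set.Ico c d)
      ≤ volume (Set.Ico a (min b c)) + volume (Set.Ico (max a d) b) :=
        le_trans (measure_mono hsub) (measure_union_le _ _)
    _ = ENNReal.ofReal (min b c - a) + ENNReal.ofReal (b - max a d) := by
        rw [Real.volume_Ico, Real.volume_Ico]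
    _ ≤ ENNReal.ofReal |a - c| + ENNReal.ofReal |b - d| := by
        gcongr
        · have h1 : min b c - a ≤ c - a := by
            have := min_le_right b c; linarith
          calc min b c - a ≤ c - a := h1
            _ ≤ |c - a| := le_abs_self _
            _ = |a - c| := abs_sub_comm _ _
        · have h2 : b - max a d ≤ b - d := by
            have := le_max_right a d; linarith
          calc b - max a d ≤ b - d := h2
            _ ≤ |b - d| := le_abs_self _
    _ = ENNReal.ofReal (|a - c| + |b - d|) :=
        (ENNReal.ofReal_add (abs_nonneg _) (abs_nonneg _)).symm

lemma shift_sum_le (f : ℕ → ℝ) (h0 : f 0 = 0) (hnn : ∀ i, 0 ≤ f i) (n : ℕ) :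
    ∑ i ∈ Finset.range n, f i ≤ ∑ i ∈ Finset.range n, f (i + 1) := by
  cases n with
  | zero => simp
  | succ m =>
    rw [Finset.sum_range_succ' f m, h0, add_zero,
      Finset.sum_range_succ (fun i => f (i + 1)) m]
    exact le_add_of_nonneg_right (hnn _)

theorem stmt10 (n : ℕ) (p q : Fin n → ℝ)
    (hp : ∀ u, 0 ≤ p u) (hps : ∑ u, p u = 1)
    (hq : ∀ u, 0 ≤ q u) (hqs : ∑ u, q u = 1)
    (Up Uq : ℝ → Fin n)
    (hUp : IsInvCDFSampler p Up) (hUq : IsInvCDFSampler q Uq)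
    (Fp Fq Fp' Fq' : Fin n → ℝ)
    (hFp : ∀ u, Fp u = ∑ v ∈ Finset.univ.filter (· ≤ u), p v)
    (hFq : ∀ u, Fq u = ∑ v ∈ Finset.univ.filter (· ≤ u), q v)
    (hFp' : ∀ u, Fp' u = ∑ v ∈ Finset.univ.filter (· < u), p v)
    (hFq' : ∀ u, Fq' u = ∑ v ∈ Finset.univ.filter (· < u), q v) :
    volume {δ ∈ Set.Ico (0 : ℝ) 1 | Up δ ≠ Uq δ} ≤
        ENNReal.ofReal ((∑ u, |Fp u - Fq u|) * 2) ∧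
      volume {δ ∈ Set.Ico (0 : ℝ) 1 | Up δ ≠ Uq δ} ≤
        ENNReal.ofReal ((∑ u, |Fp u - Fq u|) + ∑ u, |Fp' u - Fq' u|) := by
  -- monotonicity: for u < v, Fq u ≤ Fq' v
  have hqmono : ∀ u v : Fin n, u < v → Fq u ≤ Fq' v := by
    intro u v huv
    rw [hFq, hFq']
    apply Finset.sum_le_sum_of_subset_of_nonneg
    · intro w hw
      simp only [Finset.mem_filter, Finset.mem_univ, true_and] at hw ⊢
      exact lt_of_le_of_lt hw huv
    · intro w _ _; exact hq w
  -- uniqueness of the q-interval containing δ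
  have huniq : ∀ δ ∈ Set.Ico (0:ℝ) 1, ∀ u : Fin n,
      Fq' u ≤ δ → δ < Fq u → Uq δ = u := by
    intro δ hδ u h1 h2
    obtain ⟨hq1, hq2⟩ := hUq δ hδ
    rw [← hFq'] at hq1
    rw [← hFq] at hq2
    by_contra hne
    rcases lt_or_gt_of_ne hne with h | h
    · have := hqmono _ _ h
      linarith
    · have := hqmono _ _ h
      linarith
  -- the disagreement set is contained in a union of Ico differences
  have hsub : {δ ∈ Set.Ico (0 : ℝ) 1 | Up δ ≠ Uq δ} ⊆
      ⋃ u : Fin n, (Set.Ico (Fp' u) (Fp u) \ Set.Ico (Fq' u) (Fq u)) := by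
    rintro δ ⟨hδ, hne⟩
    refine Set.mem_iUnion.2 ⟨Up δ, ?_, ?_⟩
    · obtain ⟨h1, h2⟩ := hUp δ hδ
      exact ⟨by rw [hFp']; exact h1, by rw [hFp]; exact h2⟩
    · rintro ⟨h1, h2⟩
      exact hne (huniq δ hδ _ h1 h2).symm
  -- main measure bound
  have hmain : volume {δ ∈ Set.Ico (0 : ℝ) 1 | Up δ ≠ Uq δ} ≤
      ENNReal.ofReal ((∑ u, |Fp u - Fq u|) + ∑ u, |Fp' u - Fq' u|) := by
    calc volume {δ ∈ Set.Ico (0 : ℝ) 1 | Up δ ≠ Uq δ}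
        ≤ volume (⋃ u : Fin n, (Set.Ico (Fp' u) (Fp u) \ Set.Ico (Fq' u) (Fq u))) :=
          measure_mono hsub
      _ ≤ ∑ u : Fin n, volume (Set.Ico (Fp' u) (Fp u) \ Set.Ico (Fq' u) (Fq u)) :=
          measure_iUnion_fintype_le _ _
      _ ≤ ∑ u : Fin n, ENNReal.ofReal (|Fp' u - Fq' u| + |Fp u - Fq u|) :=
          Finset.sum_le_sum fun u _ => ico_diff_vol _ _ _ _
      _ = ENNReal.ofReal (∑ u : Fin n, (|Fp' u - Fq' u| + |Fp u - Fq u|)) :=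
          (ENNReal.ofReal_sum_of_nonneg (fun u _ => by positivity)).symm
      _ = ENNReal.ofReal ((∑ u, |Fp u - Fq u|) + ∑ u, |Fp' u - Fq' u|) := by
          rw [Finset.sum_add_distrib, add_comm]
  refine ⟨?_, hmain⟩
  -- Σ |Fp' - Fq'| ≤ Σ |Fp - Fq| via index shift
  have h1 : (∑ u, |Fp' u - Fq' u|) = ∑ i ∈ Finset.range n,
      |∑ v ∈ Finset.univ.filter (fun v : Fin n => (v : ℕ) < i), (p v - q v)| := by
    rw [← Fin.sum_univ_eq_sum_range]
    refine Finset.sum_congr rfl fun u _ => ?_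
    rw [hFp' u, hFq' u, ← Finset.sum_sub_distrib]
    congr 1
  have h2 : (∑ u, |Fp u - Fq u|) = ∑ i ∈ Finset.range n,
      |∑ v ∈ Finset.univ.filter (fun v : Fin n => (v : ℕ) < i + 1), (p v - q v)| := by
    rw [← Fin.sum_univ_eq_sum_range]
    refine Finset.sum_congr rfl fun u _ => ?_
    rw [hFp u, hFq u, ← Finset.sum_sub_distrib]
    congr 1
    refine Finset.sum_congr (Finset.filter_congr fun v _ => ?_) fun v _ => rfl
    rw [Fin.le_def, Nat.lt_succ_iff]
  have hshift : (∑ u, |Fp' u - Fq' u|) ≤ ∑ u, |Fp u - Fq u| := by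
    rw [h1, h2]
    exact shift_sum_le _ (by simp) (fun i => abs_nonneg _) n
  refine le_trans hmain (ENNReal.ofReal_le_ofReal ?_)
  linarith
end

section
/- Holenstein disagreement bound (statement): for probability mass functions p and q on a finite set with total variation distance δ, the Holenstein correlated-sampling strategy (both parties use shared randomness consisting of a uniformly random infinite sequence of pairs (u_i, t_i) with u_i uniform on the support set and t_i uniform on [0,1], and each party outputs the first u_i in the sequence with t_i < p(u_i) resp. t_i < q(u_i)) produces outputs X, Y satisfying P(X ≠ Y) ≤ 2δ/(1 + δ). -/
/-!
Call `A = {(u, t) | t < p u}` and `B = {(u, t) | t < q u}` the acceptance regions of the two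
parties. The outputs can differ only if, at the first index where the sample `(u_i, t_i)` lands
in `A ∪ B`, it lands in `A ∆ B`. Under the uniform law `ν` of one sample,
`ν (A ∪ B) = (1 + δ) / |U|` and `ν (A ∆ B) = 2δ / |U|`, and independence makes the probabilities
of these first-entry events a geometric series summing to `ν (A ∆ B) / ν (A ∪ B) = 2δ / (1 + δ)`.
-/

open MeasureTheory

/-- The output of the Holenstein rejection-sampling strategy for pmf `p` on the
shared random sequence `ω` of pairs `(u_i, t_i)`: the first `u_i` with
`t_i < p u_i`. (If no index accepts, the value at index `sInf ∅ = 0` is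
returned; this happens with probability zero.) -/
noncomputable def holOut {U : Type*} (p : U → ℝ) (ω : ℕ → U × ℝ) : U :=
  (ω (sInf {i | (ω i).2 < p (ω i).1})).1

open ProbabilityTheory
open scoped ENNReal

theorem Nat.exists_first_mem_symmDiff_of_sInf_ne {s t : Set ℕ} (h : sInf s ≠ sInf t) :
    ∃ n, (∀ i < n, i ∉ s ∪ t) ∧ n ∈ symmDiff s t := by
  have hst : (s ∪ t).Nonempty := by
    by_contra hempty
    obtain ⟨rfl, rfl⟩ := Set.union_empty_iff.mp (Set.not_nonempty_iff_eq_empty.mp hempty)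
    exact h rfl
  refine ⟨sInf (s ∪ t), fun i hi => Nat.notMem_of_lt_sInf hi, ?_⟩
  have hmem := Nat.sInf_mem hst
  have sInf_eq_of_mem {r : Set ℕ} (hr : r ⊆ s ∪ t) (hr' : sInf (s ∪ t) ∈ r) :
      sInf r = sInf (s ∪ t) :=
    le_antisymm (Nat.sInf_le hr') (csInf_le_csInf' ⟨_, hr'⟩ hr)
  rw [Set.mem_union] at hmem
  rw [Set.mem_symmDiff]
  by_contra hboth
  have hs : sInf (s ∪ t) ∈ s := by tauto
  have ht : sInf (s ∪ t) ∈ t := by tauto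
  exact h ((sInf_eq_of_mem Set.subset_union_left hs).trans
    (sInf_eq_of_mem Set.subset_union_right ht).symm)

namespace ProbabilityTheory

variable {Ω α : Type*} [MeasurableSpace Ω] [MeasurableSpace α] {μ : Measure Ω} {ν : Measure α}
  {X : ℕ → Ω → α}

theorem iIndepFun.measure_firstEntry (hX : ∀ i, Measurable (X i)) (hind : iIndepFun X μ)
    (hlaw : ∀ i, μ.map (X i) = ν) {C D : Set α} (hC : MeasurableSet C) (hD : MeasurableSet D)
    (n : ℕ) : μ {ω | (∀ i < n, X i ω ∈ C) ∧ X n ω ∈ D} = ν C ^ n * ν D := by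
  have hcoord : ∀ i {A : Set α}, MeasurableSet A → μ (X i ⁻¹' A) = ν A := fun i A hA => by
    rw [← Measure.map_apply (hX i) hA, hlaw i]
  have hevent : {ω | (∀ i < n, X i ω ∈ C) ∧ X n ω ∈ D}
      = ⋂ i ∈ Finset.range (n + 1), X i ⁻¹' (if i = n then D else C) := by
    ext ω
    simp only [Set.mem_ofPred_eq, Set.mem_iInter, Finset.mem_range, Nat.lt_succ_iff_lt_or_eq,
      or_imp, forall_and, Set.mem_preimage, forall_eq, if_pos]
    exact and_congr (forall₂_congr fun i hi => by rw [if_neg hi.ne]) Iff.rfl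
  rw [hevent, hind.measure_inter_preimage_eq_mul _ fun i _ => by split_ifs <;> assumption,
    Finset.prod_range_succ, if_pos rfl, hcoord n hD, Finset.prod_congr rfl fun i hi => by
      rw [if_neg (Finset.mem_range.mp hi).ne, hcoord i hC], Finset.prod_const, Finset.card_range]

theorem iIndepFun.measure_iUnion_firstEntry_le [IsProbabilityMeasure μ]
    (hX : ∀ i, Measurable (X i)) (hind : iIndepFun X μ)
    (hlaw : ∀ i, μ.map (X i) = ν) {S D : Set α} (hS : MeasurableSet S) (hD : MeasurableSet D) :
    μ (⋃ n, {ω | (∀ i < n, X i ω ∉ S) ∧ X n ω ∈ D}) ≤ ν D / ν S := by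
  have : IsProbabilityMeasure ν := hlaw 0 ▸ Measure.isProbabilityMeasure_map (hX 0).aemeasurable
  calc μ (⋃ n, {ω | (∀ i < n, X i ω ∉ S) ∧ X n ω ∈ D})
      ≤ ∑' n, μ {ω | (∀ i < n, X i ω ∈ Sᶜ) ∧ X n ω ∈ D} := measure_iUnion_le _
    _ = ∑' n, ν Sᶜ ^ n * ν D := by
      simp_rw [hind.measure_firstEntry hX hlaw hS.compl hD]
    _ = ν D / ν S := by
      rw [ENNReal.tsum_mul_right, ENNReal.tsum_geometric, prob_compl_eq_one_sub hS,
        ENNReal.sub_sub_cancel ENNReal.one_ne_top prob_le_one, div_eq_mul_inv, mul_comm]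

end ProbabilityTheory

theorem measurableSet_setOf_snd_mem {α β : Type*} [MeasurableSpace α] [MeasurableSpace β]
    [Countable α] [MeasurableSingletonClass α] {f : α → Set β} (hf : ∀ a, MeasurableSet (f a)) :
    MeasurableSet {x : α × β | x.2 ∈ f x.1} := by
  have : {x : α × β | x.2 ∈ f x.1} = ⋃ a, {a} ×ˢ f a := by
    ext ⟨a, b⟩
    simp
  rw [this]
  exact .iUnion fun a => (measurableSet_singleton a).prod (hf a)

theorem union_setOf_snd_lt {α β : Type*} [LinearOrder β] (f g : α → β) :
    {x : α × β | x.2 < f x.1} ∪ {x | x.2 < g x.1} = {x | x.2 < max (f x.1) (g x.1)} :=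
  Set.ext fun _ => lt_max_iff.symm

theorem symmDiff_setOf_snd_lt {α β : Type*} [LinearOrder β] (f g : α → β) :
    symmDiff {x : α × β | x.2 < f x.1} {x | x.2 < g x.1}
      = {x | x.2 ∈ Set.Ico (min (f x.1) (g x.1)) (max (f x.1) (g x.1))} := by
  ext x
  simp only [Set.mem_symmDiff, Set.mem_ofPred_eq, Set.mem_Ico, ← not_lt, lt_min_iff, lt_max_iff]
  tauto

theorem volume_Icc_zero_one_inter_Ico {a b : ℝ} (ha : 0 ≤ a) (hb : b ≤ 1) :
    volume (Set.Ico a b ∩ Set.Icc 0 1) = ENNReal.ofReal (b - a) := by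
  rw [Set.inter_eq_left.mpr (Set.Ico_subset_Icc_self.trans (Set.Icc_subset_Icc ha hb)),
    Real.volume_Ico]

theorem volume_Icc_zero_one_inter_Iio {a : ℝ} (ha : a ≤ 1) :
    volume (Set.Iio a ∩ Set.Icc 0 1) = ENNReal.ofReal a := by
  have : Set.Iio a ∩ Set.Icc 0 1 = Set.Ico 0 a := by
    ext t
    simp only [Set.mem_inter_iff, Set.mem_Iio, Set.mem_Icc, Set.mem_Ico]
    constructor
    · rintro ⟨hta, ht₀, -⟩
      exact ⟨ht₀, hta⟩
    · rintro ⟨ht₀, hta⟩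
      exact ⟨hta, ht₀, by linarith⟩
  rw [this, Real.volume_Ico, sub_zero]

theorem le_one_of_sum_eq_one {ι : Type*} [Fintype ι] {p : ι → ℝ} (hp : ∀ i, 0 ≤ p i)
    (hps : ∑ i, p i = 1) (i : ι) : p i ≤ 1 :=
  hps ▸ Finset.single_le_sum (fun j _ => hp j) (Finset.mem_univ i)

theorem sum_max_eq_one_add_half_sum_abs_sub {ι : Type*} {s : Finset ι} {p q : ι → ℝ}
    (hps : ∑ i ∈ s, p i = 1) (hqs : ∑ i ∈ s, q i = 1) :
    ∑ i ∈ s, max (p i) (q i) = 1 + 1 / 2 * ∑ i ∈ s, |p i - q i| := by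
  have hmax (i : ι) : max (p i) (q i) = (p i + q i + |p i - q i|) / 2 := by
    linarith [min_add_max (p i) (q i), max_sub_min_eq_abs' (p i) (q i)]
  rw [Finset.sum_congr rfl fun i _ => hmax i, ← Finset.sum_div, Finset.sum_add_distrib,
    Finset.sum_add_distrib, hps, hqs]
  ring

section unifPairMeasure

variable (U : Type*) [Fintype U] [MeasurableSpace U]

noncomputable def unifPairMeasure : Measure (U × ℝ) :=
  ((Fintype.card U : ℝ≥0∞)⁻¹ • Measure.count).prod (volume.restrict (Set.Icc (0 : ℝ) 1))

variable {U} [MeasurableSingletonClass U]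

theorem unifPairMeasure_setOf_snd_mem {f : U → Set ℝ} (hf : ∀ u, MeasurableSet (f u)) :
    unifPairMeasure U {x | x.2 ∈ f x.1}
      = (Fintype.card U : ℝ≥0∞)⁻¹ * ∑ u, volume (f u ∩ Set.Icc 0 1) := by
  rw [unifPairMeasure, Measure.prod_apply (measurableSet_setOf_snd_mem hf),
    lintegral_smul_measure, lintegral_count, tsum_fintype, smul_eq_mul]
  simp only [Set.preimage_ofPred_eq, Set.ofPred_mem_eq, Measure.restrict_apply (hf _)]

theorem unifPairMeasure_setOf_snd_lt {f : U → ℝ} (hf₀ : ∀ u, 0 ≤ f u) (hf₁ : ∀ u, f u ≤ 1) :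
    unifPairMeasure U {x | x.2 < f x.1}
      = (Fintype.card U : ℝ≥0∞)⁻¹ * ENNReal.ofReal (∑ u, f u) := by
  refine (unifPairMeasure_setOf_snd_mem (f := fun u => Set.Iio (f u))
    fun _ => measurableSet_Iio).trans ?_
  rw [ENNReal.ofReal_sum_of_nonneg fun u _ => hf₀ u]
  exact congrArg _ (Finset.sum_congr rfl fun u _ => volume_Icc_zero_one_inter_Iio (hf₁ u))

theorem unifPairMeasure_setOf_snd_mem_Ico {f g : U → ℝ} (hg₀ : ∀ u, 0 ≤ g u)
    (hgf : ∀ u, g u ≤ f u) (hf₁ : ∀ u, f u ≤ 1) :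
    unifPairMeasure U {x | x.2 ∈ Set.Ico (g x.1) (f x.1)}
      = (Fintype.card U : ℝ≥0∞)⁻¹ * ENNReal.ofReal (∑ u, (f u - g u)) := by
  refine (unifPairMeasure_setOf_snd_mem fun _ => measurableSet_Ico).trans ?_
  rw [ENNReal.ofReal_sum_of_nonneg fun u _ => sub_nonneg.mpr (hgf u)]
  exact congrArg _ (Finset.sum_congr rfl fun u _ =>
    volume_Icc_zero_one_inter_Ico (hg₀ u) (hf₁ u))

variable {p q : U → ℝ}

theorem unifPairMeasure_union_setOf_snd_lt (hp : ∀ u, 0 ≤ p u) (hps : ∑ u, p u = 1)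
    (hq : ∀ u, 0 ≤ q u) (hqs : ∑ u, q u = 1) :
    unifPairMeasure U ({x | x.2 < p x.1} ∪ {x | x.2 < q x.1})
      = (Fintype.card U : ℝ≥0∞)⁻¹ * ENNReal.ofReal (1 + 1 / 2 * ∑ u, |p u - q u|) := by
  rw [union_setOf_snd_lt, unifPairMeasure_setOf_snd_lt (fun u => (hp u).trans (le_max_left _ _))
    fun u => max_le (le_one_of_sum_eq_one hp hps u) (le_one_of_sum_eq_one hq hqs u),
    sum_max_eq_one_add_half_sum_abs_sub hps hqs]

theorem unifPairMeasure_symmDiff_setOf_snd_lt (hp : ∀ u, 0 ≤ p u) (hps : ∑ u, p u = 1)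
    (hq : ∀ u, 0 ≤ q u) (hqs : ∑ u, q u = 1) :
    unifPairMeasure U (symmDiff {x | x.2 < p x.1} {x | x.2 < q x.1})
      = (Fintype.card U : ℝ≥0∞)⁻¹ * ENNReal.ofReal (∑ u, |p u - q u|) := by
  rw [symmDiff_setOf_snd_lt, unifPairMeasure_setOf_snd_mem_Ico (fun u => le_min (hp u) (hq u))
    (fun u => min_le_max)
    fun u => max_le (le_one_of_sum_eq_one hp hps u) (le_one_of_sum_eq_one hq hqs u)]
  simp only [max_sub_min_eq_abs']

end unifPairMeasure

theorem setOf_holOut_ne_subset {U : Type*} (p q : U → ℝ) :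
    {ω | holOut p ω ≠ holOut q ω} ⊆
      ⋃ n, {ω | (∀ i < n, ω i ∉ {x | x.2 < p x.1} ∪ {x | x.2 < q x.1}) ∧
        ω n ∈ symmDiff {x | x.2 < p x.1} {x | x.2 < q x.1}} := by
  intro ω hω
  obtain ⟨n, hbefore, hn⟩ := Nat.exists_first_mem_symmDiff_of_sInf_ne
    (s := ω ⁻¹' {x | x.2 < p x.1}) (t := ω ⁻¹' {x | x.2 < q x.1})
    fun h => hω (congrArg (fun i => (ω i).1) h)
  exact Set.mem_iUnion.mpr ⟨n, hbefore, by rwa [← Set.preimage_symmDiff] at hn⟩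

theorem stmt17 {U : Type*} [Fintype U] [MeasurableSpace U]
    [MeasurableSingletonClass U]
    (p q : U → ℝ)
    (hp : ∀ u, 0 ≤ p u) (hps : ∑ u, p u = 1)
    (hq : ∀ u, 0 ≤ q u) (hqs : ∑ u, q u = 1)
    (δ : ℝ) (hδ : δ = (1 / 2) * ∑ u, |p u - q u|)
    (μ : Measure (ℕ → U × ℝ)) [IsProbabilityMeasure μ]
    -- each coordinate pair `(u_i, t_i)` has `u_i` uniform on `U` and `t_i`
    -- uniform on `[0,1]`, independently of each other
    (hlaw : ∀ i : ℕ, μ.map (fun ω => ω i) =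
      ((Fintype.card U : ENNReal)⁻¹ • Measure.count).prod
        (volume.restrict (Set.Icc (0 : ℝ) 1)))
    -- the coordinates are i.i.d.
    (hindep : ProbabilityTheory.iIndepFun
      (fun i ω => ω i) μ) :
    μ {ω | holOut p ω ≠ holOut q ω} ≤ ENNReal.ofReal (2 * δ / (1 + δ)) := by
  set A : Set (U × ℝ) := {x | x.2 < p x.1}
  set B : Set (U × ℝ) := {x | x.2 < q x.1}
  have : Nonempty U := by
    obtain ⟨u, -⟩ := Finset.nonempty_of_sum_ne_zero (hps ▸ one_ne_zero : ∑ u, p u ≠ 0)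
    exact ⟨u⟩
  have hδ₀ : 0 ≤ δ := by rw [hδ]; positivity
  have hsum_abs : ∑ u, |p u - q u| = 2 * δ := by rw [hδ]; ring
  have hA : MeasurableSet A := measurableSet_setOf_snd_mem fun u => measurableSet_Iio (a := p u)
  have hB : MeasurableSet B := measurableSet_setOf_snd_mem fun u => measurableSet_Iio (a := q u)
  calc μ {ω | holOut p ω ≠ holOut q ω}
      ≤ μ (⋃ n, {ω | (∀ i < n, ω i ∉ A ∪ B) ∧ ω n ∈ symmDiff A B}) :=
        measure_mono (setOf_holOut_ne_subset p q)
    _ ≤ unifPairMeasure U (symmDiff A B) / unifPairMeasure U (A ∪ B) :=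
        hindep.measure_iUnion_firstEntry_le measurable_pi_apply hlaw (hA.union hB)
          (hA.symmDiff hB)
    _ = ENNReal.ofReal (2 * δ / (1 + δ)) := by
      rw [unifPairMeasure_symmDiff_setOf_snd_lt hp hps hq hqs,
        unifPairMeasure_union_setOf_snd_lt hp hps hq hqs, ← hδ, hsum_abs,
        ENNReal.mul_div_mul_left _ _ (by simp) (by simp), ENNReal.ofReal_div_of_pos (by linarith)]
end
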